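/- Let A ⊂ ℤ^n be normal and F a codimension-one face of A, with l_F : ℤA → ℤ the associated surjective functional vanishing on F with l_F(A) ⊆ ℕ. Then l_F(ℕA) = ℕ; in particular there exists a ∈ ℕA with l_F(a) = 1. -/

import Mathlib

/-!
Take `w ∈ ℤA` with `l w = 1`; some `b ∈ A` then has `l b > 0`. Since `l` vanishes on `ℚF`,
`b ∉ ℚF`, so the rank condition gives `ℚA = ℚF + ℚb` and `w = f + c b` with `f ∈ ℚF` and
`c = 1 / l b > 0`. Adding a large multiple `k` of `s = ∑_{a ∈ F} a` makes every coefficient of `f`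
nonnegative without changing `l`, so `w + k s ∈ ℤA ∩ ℝ_{≥0}A = ℕA` and `l (w + k s) = 1`; its
multiples realise every natural number.
-/

open Finset

/-- The cast of an integer vector to a real vector. -/
def castR {n : ℕ} (a : Fin n → ℤ) : Fin n → ℝ := fun i => (a i : ℝ)

/-- The cast of an integer vector to a rational vector. -/
def castQ {n : ℕ} (a : Fin n → ℤ) : Fin n → ℚ := fun i => (a i : ℚ)

/-- The cast of an integer vector to a complex vector. -/
def castC {n : ℕ} (a : Fin n → ℤ) : Fin n → ℂ := fun i => (a i : ℂ)

/-- The real convex cone `ℝ_{≥0}A` generated by a finite set `A ⊂ ℤ^n`. -/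
def realCone {n : ℕ} (A : Finset (Fin n → ℤ)) : Set (Fin n → ℝ) :=
  {x | ∃ c : (Fin n → ℤ) → ℝ, (∀ a, 0 ≤ c a) ∧ x = ∑ a ∈ A, c a • castR a}

/-- The rational span `ℚA`, viewed inside `ℝ^n`. -/
def ratSpan {n : ℕ} (A : Finset (Fin n → ℤ)) : Set (Fin n → ℝ) :=
  {x | ∃ c : (Fin n → ℤ) → ℚ, x = ∑ a ∈ A, (c a : ℝ) • castR a}

/-- The rational cone `ℚ_{≥0}A`, viewed inside `ℝ^n`. -/
def ratCone {n : ℕ} (A : Finset (Fin n → ℤ)) : Set (Fin n → ℝ) :=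
  {x | ∃ c : (Fin n → ℤ) → ℚ, (∀ a, 0 ≤ c a) ∧ x = ∑ a ∈ A, (c a : ℝ) • castR a}

/-- `F` is a face of `A`: `F = A ∩ ker h` for some `h : ℤA →+ ℤ` with `h(A) ⊆ ℕ`. -/
def IsFace {n : ℕ} (A F : Finset (Fin n → ℤ)) : Prop :=
  F ⊆ A ∧ ∃ h : AddSubgroup.closure (A : Set (Fin n → ℤ)) →+ ℤ,
    ∀ (a : Fin n → ℤ) (ha : a ∈ A),
      0 ≤ h ⟨a, AddSubgroup.subset_closure (Finset.mem_coe.mpr ha)⟩ ∧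
      (a ∈ F ↔ h ⟨a, AddSubgroup.subset_closure (Finset.mem_coe.mpr ha)⟩ = 0)

/-- The rank of the subgroup `ℤA`, i.e. the dimension of the `ℚ`-span of `A`. -/
noncomputable def rkQ {n : ℕ} (A : Finset (Fin n → ℤ)) : ℕ :=
  Module.finrank ℚ (Submodule.span ℚ (castQ '' (A : Set (Fin n → ℤ))))

/-- `A` is normal: `ℝ_{≥0}A ∩ ℤA = ℕA`. -/
def IsNormal {n : ℕ} (A : Finset (Fin n → ℤ)) : Prop :=
  ∀ v : Fin n → ℤ,
    (v ∈ AddSubgroup.closure (A : Set (Fin n → ℤ)) ∧ castR v ∈ realCone A) ↔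
      v ∈ AddSubmonoid.closure (A : Set (Fin n → ℤ))

open Submodule

variable {n : ℕ}

noncomputable def castRHom (n : ℕ) : (Fin n → ℤ) →+ (Fin n → ℝ) :=
  (Int.castAddHom ℝ).compLeft (Fin n)

theorem castRHom_apply (a : Fin n → ℤ) : castRHom n a = castR a := rfl

def castQHom (n : ℕ) : (Fin n → ℤ) →+ (Fin n → ℚ) :=
  (Int.castAddHom ℚ).compLeft (Fin n)

noncomputable def castQR (n : ℕ) : (Fin n → ℚ) →ₗ[ℚ] (Fin n → ℝ) :=
  (Algebra.linearMap ℚ ℝ).compLeft (Fin n)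

theorem castQR_castQ (a : Fin n → ℤ) : castQR n (castQ a) = castR a := by
  ext i; simp [castQR, castQ, castR]

theorem castR_add (a b : Fin n → ℤ) : castR (a + b) = castR a + castR b :=
  map_add (castRHom n) a b

theorem castR_nsmul (k : ℕ) (a : Fin n → ℤ) : castR (k • a) = (k : ℝ) • castR a := by
  rw [← castRHom_apply, map_nsmul, castRHom_apply, Nat.cast_smul_eq_nsmul]

theorem castR_sum {ι : Type*} (s : Finset ι) (a : ι → Fin n → ℤ) :
    castR (∑ i ∈ s, a i) = ∑ i ∈ s, castR (a i) :=
  map_sum (castRHom n) a s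

theorem Submodule.sup_span_singleton_eq_of_finrank_add_one {K V : Type*} [DivisionRing K]
    [AddCommGroup V] [Module K V] [Module.Finite K V] {U W : Submodule K V} (hUW : U ≤ W)
    (hrank : Module.finrank K U + 1 = Module.finrank K W) {x : V} (hxW : x ∈ W) (hxU : x ∉ U) :
    U ⊔ K ∙ x = W :=
  eq_of_le_of_finrank_eq (sup_le hUW ((span_singleton_le_iff_mem _ _).mpr hxW))
    (by rw [finrank_sup_span_singleton hxU, hrank])

section Cone

variable {A F : Finset (Fin n → ℤ)}

theorem realCone_mono (h : F ⊆ A) : realCone F ⊆ realCone A := by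
  classical
  rintro _ ⟨c, hc, rfl⟩
  refine ⟨fun a => if a ∈ F then c a else 0, fun a => by dsimp only; split_ifs <;> simp [hc], ?_⟩
  simp only [ite_smul, zero_smul, sum_ite_mem, inter_eq_right.mpr h]

theorem add_mem_realCone {x y : Fin n → ℝ} (hx : x ∈ realCone A) (hy : y ∈ realCone A) :
    x + y ∈ realCone A := by
  obtain ⟨c, hc, rfl⟩ := hx
  obtain ⟨d, hd, rfl⟩ := hy
  exact ⟨c + d, fun a => add_nonneg (hc a) (hd a),
    by simp only [Pi.add_apply, add_smul, sum_add_distrib]⟩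

theorem smul_castR_mem_realCone {b : Fin n → ℤ} (hb : b ∈ A) {t : ℝ} (ht : 0 ≤ t) :
    t • castR b ∈ realCone A := by
  classical
  refine ⟨fun a => if a = b then t else 0, fun a => by dsimp only; split_ifs <;> simp [ht], ?_⟩
  simp [ite_smul, hb]

theorem exists_add_nsmul_sum_mem_realCone {x : Fin n → ℚ}
    (hx : x ∈ span ℚ (castQ '' (F : Set (Fin n → ℤ)))) :
    ∃ k : ℕ, castQR n x + (k : ℝ) • castR (∑ a ∈ F, a) ∈ realCone F := by
  obtain ⟨q, rfl⟩ := (mem_span_image_finset_iff_exists_fun' ℚ).mp hx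
  set k := F.sup fun a => ⌈-q a⌉₊
  have hk : ∀ a ∈ F, 0 ≤ q a + k := fun a ha => by
    have : -q a ≤ k := (Nat.le_ceil _).trans (by exact_mod_cast le_sup (f := fun a => ⌈-q a⌉₊) ha)
    linarith
  refine ⟨k, fun a => ((max (q a + k) 0 : ℚ) : ℝ), fun a => by positivity, ?_⟩
  rw [map_sum, castR_sum, smul_sum, ← sum_add_distrib]
  refine sum_congr rfl fun a ha => ?_
  dsimp only
  rw [map_rat_smul, castQR_castQ, ← Rat.cast_smul_eq_qsmul ℝ, max_eq_left (hk a ha), Rat.cast_add,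
    Rat.cast_natCast, add_smul]

end Cone

section Functional

variable {A F : Finset (Fin n → ℤ)} {l : (Fin n → ℝ) →ₗ[ℝ] ℝ}

theorem castQ_mem_span_of_mem_closure {v : Fin n → ℤ}
    (hv : v ∈ AddSubgroup.closure (A : Set (Fin n → ℤ))) :
    castQ v ∈ span ℚ (castQ '' (A : Set (Fin n → ℤ))) :=
  (AddSubgroup.closure_le ((span ℚ _).toAddSubgroup.comap (castQHom n))).mpr
    (fun _ ha => subset_span (Set.mem_image_of_mem castQ ha)) hv

theorem exists_apply_castR_ne_zero_of_mem_closure {v : Fin n → ℤ}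
    (hv : v ∈ AddSubgroup.closure (A : Set (Fin n → ℤ))) (hlv : l (castR v) ≠ 0) :
    ∃ a ∈ A, l (castR a) ≠ 0 := by
  by_contra! h
  exact hlv ((AddSubgroup.closure_le (l.toAddMonoidHom.comp (castRHom n)).ker).mpr h hv)

theorem apply_castQR_eq_zero_of_mem_span (hl0 : ∀ a ∈ F, l (castR a) = 0) {x : Fin n → ℚ}
    (hx : x ∈ span ℚ (castQ '' (F : Set (Fin n → ℤ)))) : l (castQR n x) = 0 :=
  (span_le (p := LinearMap.ker (l.restrictScalars ℚ ∘ₗ castQR n))).mpr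
    (by rintro _ ⟨a, ha, rfl⟩; simpa [castQR_castQ] using hl0 a ha) hx

theorem exists_nat_eq_apply_castR_of_mem_closure (hlA : ∀ a ∈ A, ∃ m : ℕ, l (castR a) = m) :
    ∀ v ∈ AddSubmonoid.closure (A : Set (Fin n → ℤ)), ∃ m : ℕ, l (castR v) = m := by
  have : AddSubmonoid.closure (A : Set (Fin n → ℤ)) ≤
      (AddMonoidHom.mrange (Nat.castAddMonoidHom ℝ)).comap (l.toAddMonoidHom.comp (castRHom n)) :=
    AddSubmonoid.closure_le.mpr fun a ha => (hlA a ha).imp fun _ => Eq.symm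
  exact fun v hv => (this hv).imp fun _ => Eq.symm

theorem exists_castR_eq_add_smul (hFA : F ⊆ A) (hcodim : rkQ F + 1 = rkQ A)
    (hl0 : ∀ a ∈ F, l (castR a) = 0) (hlA : ∀ a ∈ A, ∃ m : ℕ, l (castR a) = m)
    {w : Fin n → ℤ} (hw : w ∈ AddSubgroup.closure (A : Set (Fin n → ℤ))) (hlw : 0 < l (castR w)) :
    ∃ f ∈ span ℚ (castQ '' (F : Set (Fin n → ℤ))), ∃ b ∈ A, ∃ c : ℝ, 0 ≤ c ∧
      castR w = castQR n f + c • castR b := by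
  obtain ⟨b, hbA, hlb⟩ := exists_apply_castR_ne_zero_of_mem_closure hw hlw.ne'
  have hbF : castQ b ∉ span ℚ (castQ '' (F : Set (Fin n → ℤ))) := fun h =>
    hlb (by simpa [castQR_castQ] using apply_castQR_eq_zero_of_mem_span hl0 h)
  have hspan := sup_span_singleton_eq_of_finrank_add_one
    (span_mono (Set.image_mono (coe_subset.mpr hFA))) hcodim (subset_span ⟨b, hbA, rfl⟩) hbF
  obtain ⟨f, hf, _, hg, hfc⟩ := mem_sup.mp (hspan ▸ castQ_mem_span_of_mem_closure hw)
  obtain ⟨c, rfl⟩ := mem_span_singleton.mp hg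
  have hw_eq : castR w = castQR n f + (c : ℝ) • castR b := by
    rw [← castQR_castQ, ← hfc, map_add, map_rat_smul, castQR_castQ, Rat.cast_smul_eq_qsmul]
  refine ⟨f, hf, b, hbA, c, ?_, hw_eq⟩
  obtain ⟨N, hN⟩ := hlA b hbA
  have hlw_eq : l (castR w) = c * N := by
    rw [hw_eq, map_add, map_smul, apply_castQR_eq_zero_of_mem_span hl0 hf, hN, smul_eq_mul,
      zero_add]
  exact (pos_of_mul_pos_left (hlw_eq ▸ hlw) (Nat.cast_nonneg N)).le

theorem exists_mem_closure_apply_castR_eq_one (hA : IsNormal A) (hFA : F ⊆ A)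
    (hcodim : rkQ F + 1 = rkQ A) (hl0 : ∀ a ∈ F, l (castR a) = 0)
    (hlA : ∀ a ∈ A, ∃ m : ℕ, l (castR a) = m)
    (hsurj : ∃ v ∈ AddSubgroup.closure (A : Set (Fin n → ℤ)), l (castR v) = 1) :
    ∃ v ∈ AddSubmonoid.closure (A : Set (Fin n → ℤ)), l (castR v) = 1 := by
  obtain ⟨w, hw, hlw⟩ := hsurj
  obtain ⟨f, hf, b, hbA, c, hc, hw_eq⟩ :=
    exists_castR_eq_add_smul hFA hcodim hl0 hlA hw (hlw ▸ one_pos)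
  obtain ⟨k, hk⟩ := exists_add_nsmul_sum_mem_realCone hf
  set s := ∑ a ∈ F, a
  have hls : l (castR s) = 0 := by
    rw [castR_sum, map_sum]
    exact sum_eq_zero hl0
  have hv_cone : castR (w + k • s) ∈ realCone A := by
    rw [castR_add, castR_nsmul, hw_eq, add_right_comm]
    exact add_mem_realCone (realCone_mono hFA hk) (smul_castR_mem_realCone hbA hc)
  have hv_lattice : w + k • s ∈ AddSubgroup.closure (A : Set (Fin n → ℤ)) :=
    add_mem hw (nsmul_mem (sum_mem fun a ha => AddSubgroup.subset_closure (hFA ha)) k)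
  refine ⟨w + k • s, (hA _).mp ⟨hv_lattice, hv_cone⟩, ?_⟩
  rw [castR_add, castR_nsmul, map_add, map_smul, hls, smul_zero, add_zero, hlw]

end Functional

theorem image_nat_of_codimOne_general (n : ℕ) (A F : Finset (Fin n → ℤ))
    (hA : IsNormal A) (hF : IsFace A F) (hcodim : rkQ F + 1 = rkQ A)
    (l : (Fin n → ℝ) →ₗ[ℝ] ℝ)
    (hl0 : ∀ a ∈ F, l (castR a) = 0)
    (hlA : ∀ a ∈ A, ∃ m : ℕ, l (castR a) = m)
    (hsurj : ∃ v ∈ AddSubgroup.closure (A : Set (Fin n → ℤ)), l (castR v) = 1) :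
    (∀ m : ℕ, ∃ v ∈ AddSubmonoid.closure (A : Set (Fin n → ℤ)), l (castR v) = m) ∧
    (∀ v ∈ AddSubmonoid.closure (A : Set (Fin n → ℤ)), ∃ m : ℕ, l (castR v) = m) ∧
    (∃ v ∈ AddSubmonoid.closure (A : Set (Fin n → ℤ)), l (castR v) = 1) := by
  obtain ⟨v, hv, hlv⟩ := exists_mem_closure_apply_castR_eq_one hA hF.1 hcodim hl0 hlA hsurj
  refine ⟨fun m => ⟨m • v, nsmul_mem hv m, ?_⟩, exists_nat_eq_apply_castR_of_mem_closure hlA,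
    v, hv, hlv⟩
  rw [castR_nsmul, map_smul, hlv, smul_eq_mul, mul_one]

/-- A normal, F a codimension-one face with primitive functional l.
Then l(ℕA) = ℕ; in particular some a ∈ ℕA has l(a) = 1. -/
theorem image_nat_of_codimOne (n : ℕ) (A F : Finset (Fin n → ℤ))
    (hA : IsNormal A) (hF : IsFace A F) (hcodim : rkQ F + 1 = rkQ A)
    (l : (Fin n → ℝ) →ₗ[ℝ] ℝ)
    (hl0 : ∀ a ∈ F, l (castR a) = 0)
    (hlA : ∀ a ∈ A, ∃ m : ℕ, l (castR a) = m)
    (hlZ : ∀ v ∈ AddSubgroup.closure (A : Set (Fin n → ℤ)), ∃ m : ℤ, l (castR v) = m)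
    (hsurj : ∃ v ∈ AddSubgroup.closure (A : Set (Fin n → ℤ)), l (castR v) = 1) :
    (∀ m : ℕ, ∃ v ∈ AddSubmonoid.closure (A : Set (Fin n → ℤ)), l (castR v) = m) ∧
    (∀ v ∈ AddSubmonoid.closure (A : Set (Fin n → ℤ)), ∃ m : ℕ, l (castR v) = m) ∧
    (∃ v ∈ AddSubmonoid.closure (A : Set (Fin n → ℤ)), l (castR v) = 1) :=
  image_nat_of_codimOne_general n A F hA hF hcodim l hl0 hlA hsurj
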